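/- Let g be a continuous distortion function and set α_j = g(j/n) for j = 0,…,n. Let j ∈ {0,…,n−2} and let α satisfy α_j < α < α_{j+1}. Then for every x ∈ ℝⁿ, the non-scaled generalized-ES norm satisfies ⟨⟨x⟩⟩_α^{g} = λ ⟨⟨x⟩⟩_{α_j}^{g} + (1−λ) ⟨⟨x⟩⟩_{α_{j+1}}^{g}, where λ = (α_{j+1}−α)/(α_{j+1}−α_j). -/
import Mathlib


open Finset

/-- The absolute values of the components of `x`, arranged in increasing order:
`absSorted x i` is `|x|_(i+1)` in the paper's notation. -/
noncomputable def absSorted {n : ℕ} (x : Fin n → ℝ) : Fin n → ℝ :=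
  fun i => |x (Tuple.sort (fun j => |x j|) i)|

/-- `coeff n g i = g((i+1)/n) - g(i/n)`, the paper's `c_{i+1}`. -/
noncomputable def coeff (n : ℕ) (g : ℝ → ℝ) (i : Fin n) : ℝ :=
  g (((i : ℕ) + 1 : ℝ) / n) - g (((i : ℕ) : ℝ) / n)

/-- The objective function whose infimum over `t` defines the scaled generalized-ES norm. -/
noncomputable def sgesObj {n : ℕ} (g : ℝ → ℝ) (α : ℝ) (x : Fin n → ℝ) (t : ℝ) : ℝ :=
  t + (1 - α)⁻¹ * ∑ i, coeff n g i * max (absSorted x i - t) 0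

/-- The scaled generalized-ES norm `⟨⟨x⟩⟩_α^{S,g}`. -/
noncomputable def sges {n : ℕ} (g : ℝ → ℝ) (α : ℝ) (x : Fin n → ℝ) : ℝ :=
  ⨅ t : ℝ, sgesObj g α x t

/-- The non-scaled generalized-ES norm `⟨⟨x⟩⟩_α^{g} = n(1-α)⟨⟨x⟩⟩_α^{S,g}`. -/
noncomputable def nges {n : ℕ} (g : ℝ → ℝ) (α : ℝ) (x : Fin n → ℝ) : ℝ :=
  (n : ℝ) * (1 - α) * sges g α x

/-- The dual norm of a (norm) functional `N` on `ℝⁿ`. -/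
noncomputable def dualNorm {n : ℕ} (N : (Fin n → ℝ) → ℝ) (y : Fin n → ℝ) : ℝ :=
  sSup {r : ℝ | ∃ x : Fin n → ℝ, N x ≤ 1 ∧ r = ∑ i, x i * y i}

/-- The ordered weighted L1 (OWL) norm. -/
noncomputable def owl {n : ℕ} (w : Fin n → ℝ) (x : Fin n → ℝ) : ℝ :=
  ∑ i, w i * absSorted x i

lemma grid_mem {n m : ℕ} (hn : 0 < n) (hm : m ≤ n) : ((m : ℝ) / n) ∈ Set.Icc (0:ℝ) 1 := by
  have hn' : (0:ℝ) < n := by exact_mod_cast hn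
  constructor
  · positivity
  · rw [div_le_one hn']; exact_mod_cast hm

lemma grid_div_le {n a b : ℕ} (hn : 0 < n) (h : a ≤ b) : ((a:ℝ)/n) ≤ (b:ℝ)/n := by
  have hn' : (0:ℝ) < n := by exact_mod_cast hn
  have hb : (a:ℝ) ≤ (b:ℝ) := by exact_mod_cast h
  exact (div_le_div_iff_of_pos_right hn').mpr hb

lemma coeff_nonneg {n : ℕ} (hn : 0 < n) {g : ℝ → ℝ}
    (hg_mono : MonotoneOn g (Set.Icc 0 1)) (i : Fin n) : 0 ≤ coeff n g i := by
  have h1 : (((i:ℕ)) : ℝ)/n ∈ Set.Icc (0:ℝ) 1 := grid_mem hn (le_of_lt i.isLt)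
  have h2 : (((i:ℕ) + 1 : ℕ) : ℝ)/n ∈ Set.Icc (0:ℝ) 1 := grid_mem hn i.isLt
  have h2' : (((i:ℕ) : ℝ) + 1)/n ∈ Set.Icc (0:ℝ) 1 := by push_cast at h2; exact h2
  have hle : (((i:ℕ)) : ℝ)/n ≤ (((i:ℕ) : ℝ) + 1)/n := by
    have := grid_div_le (a := (i:ℕ)) (b := (i:ℕ)+1) hn (Nat.le_succ _)
    push_cast at this; exact this
  exact sub_nonneg.mpr (hg_mono h1 h2' hle)

lemma sum_coeff_tail (n : ℕ) (g : ℝ → ℝ) (k : ℕ) (hk : k ≤ n) :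
    ∑ i : Fin n, (if k ≤ (i : ℕ) then coeff n g i else 0)
      = g ((n : ℝ)/n) - g ((k : ℝ)/n) := by
  set G : ℕ → ℝ := fun m => g ((m:ℝ)/n) with hG
  have hc : ∀ i : Fin n, coeff n g i = G ((i:ℕ)+1) - G (i:ℕ) := by
    intro i; simp only [hG, coeff]; push_cast; ring_nf
  calc ∑ i : Fin n, (if k ≤ (i:ℕ) then coeff n g i else 0)
      = ∑ i : Fin n, (fun m => if k ≤ m then G (m+1) - G m else 0) (i:ℕ) := by
        apply Finset.sum_congr rfl; intro i _; simp only [hc]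
    _ = ∑ m ∈ Finset.range n, (if k ≤ m then G (m+1) - G m else 0) :=
        Fin.sum_univ_eq_sum_range (fun m => if k ≤ m then G (m+1) - G m else 0) n
    _ = ∑ m ∈ (Finset.range n).filter (fun m => k ≤ m), (G (m+1) - G m) :=
        (Finset.sum_filter _ _).symm
    _ = ∑ m ∈ Finset.Ico k n, (G (m+1) - G m) := by
        congr 1; ext m; simp [Finset.mem_filter, Finset.mem_range, Finset.mem_Ico, and_comm]
    _ = G n - G k := by
        rw [Finset.sum_Ico_eq_sub _ hk, Finset.sum_range_sub, Finset.sum_range_sub]; ring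

lemma nges_eq (n : ℕ) (g : ℝ → ℝ) (hg_mono : MonotoneOn g (Set.Icc 0 1))
    (hg1 : g 1 = 1) (j : ℕ) (hjn : j < n) (β : ℝ)
    (hβ1 : g ((j:ℝ)/n) ≤ β) (hβ2 : β ≤ g (((j:ℝ)+1)/n)) (hβ3 : β < 1)
    (x : Fin n → ℝ) :
    nges g β x = (n : ℝ) * (1 - β) * absSorted x ⟨j, hjn⟩
      + (n : ℝ) * ∑ i, coeff n g i * max (absSorted x i - absSorted x ⟨j, hjn⟩) 0 := by
  have hn : 0 < n := lt_of_le_of_lt (Nat.zero_le j) hjn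
  have hn' : (0:ℝ) < n := by exact_mod_cast hn
  set a := absSorted x with ha
  have hamono : Monotone a := Tuple.monotone_sort (fun j => |x j|)
  set T := a ⟨j, hjn⟩ with hT
  set S : ℝ → ℝ := fun t => ∑ i, coeff n g i * max (a i - t) 0 with hS
  have hβpos : 0 < 1 - β := by linarith
  have hgn : g ((n:ℝ)/n) = 1 := by rw [div_self (ne_of_gt hn')]; exact hg1
  have hcn : ∀ i : Fin n, 0 ≤ coeff n g i := coeff_nonneg hn hg_mono
  have hobj : ∀ s : ℝ, sgesObj g β x s = (1-β)⁻¹ * ((1-β) * s + S s) := by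
    intro s
    simp only [sgesObj, hS]
    field_simp
    ring
  have key : ∀ t : ℝ, sgesObj g β x T ≤ sgesObj g β x t := by
    intro t
    rw [hobj t, hobj T]
    apply mul_le_mul_of_nonneg_left ?_ (le_of_lt (inv_pos.mpr hβpos))
    rcases le_total t T with hle | hle
    · -- t ≤ T
      have h1 : ∀ i : Fin n,
          coeff n g i * max (a i - T) 0 + (if j ≤ (i:ℕ) then coeff n g i else 0) * (T - t)
            ≤ coeff n g i * max (a i - t) 0 := by
        intro i
        by_cases hji : j ≤ (i:ℕ)
        · have hTa : T ≤ a i := hamono (by simpa [Fin.le_def] using hji)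
          rw [if_pos hji, max_eq_left (by linarith), max_eq_left (by linarith)]
          apply le_of_eq; ring
        · rw [if_neg hji, zero_mul, add_zero]
          exact mul_le_mul_of_nonneg_left (max_le_max (by linarith) le_rfl) (hcn i)
      have h2 := Finset.sum_le_sum (fun i (_ : i ∈ Finset.univ) => h1 i)
      rw [Finset.sum_add_distrib, ← Finset.sum_mul,
        sum_coeff_tail n g j (le_of_lt hjn), hgn] at h2
      have hp : 0 ≤ (β - g ((j:ℝ)/n)) * (T - t) :=
        mul_nonneg (sub_nonneg.2 hβ1) (sub_nonneg.2 hle)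
      simp only [hS] at h2 ⊢
      nlinarith [h2, hp]
    · -- T ≤ t
      have h1 : ∀ i : Fin n,
          coeff n g i * max (a i - T) 0 - (if j+1 ≤ (i:ℕ) then coeff n g i else 0) * (t - T)
            ≤ coeff n g i * max (a i - t) 0 := by
        intro i
        by_cases hji : j+1 ≤ (i:ℕ)
        · rw [if_pos hji]
          have hmax : max (a i - T) 0 - (t - T) ≤ max (a i - t) 0 := by
            rw [sub_le_iff_le_add]
            apply max_le
            · have := le_max_left (a i - t) 0; linarith
            · have := le_max_right (a i - t) 0; linarith
          have := mul_le_mul_of_nonneg_left hmax (hcn i)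
          nlinarith [this]
        · have hia : a i ≤ T := by
            apply hamono
            simp only [Fin.le_def]
            omega
          rw [if_neg hji, zero_mul, sub_zero, max_eq_right (by linarith)]
          calc coeff n g i * 0 = 0 := by ring
            _ ≤ coeff n g i * max (a i - t) 0 :=
              mul_nonneg (hcn i) (le_max_right _ _)
      have h2 := Finset.sum_le_sum (fun i (_ : i ∈ Finset.univ) => h1 i)
      rw [Finset.sum_sub_distrib, ← Finset.sum_mul,
        sum_coeff_tail n g (j+1) (by omega), hgn] at h2
      have hcast : ((j+1 : ℕ) : ℝ) = (j:ℝ) + 1 := by push_cast; ring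
      rw [hcast] at h2
      have hp : 0 ≤ (g (((j:ℝ)+1)/n) - β) * (t - T) :=
        mul_nonneg (sub_nonneg.2 hβ2) (sub_nonneg.2 hle)
      simp only [hS] at h2 ⊢
      nlinarith [h2, hp]
  have hbdd : BddBelow (Set.range (sgesObj g β x)) := by
    refine ⟨sgesObj g β x T, ?_⟩
    rintro r ⟨t, rfl⟩
    exact key t
  have hsges : sges g β x = sgesObj g β x T :=
    le_antisymm (ciInf_le hbdd T) (le_ciInf key)
  rw [nges, hsges, hobj T]
  have hne : (1:ℝ) - β ≠ 0 := ne_of_gt hβpos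
  simp only [hS]
  field_simp

lemma sum_zero_of_top (n : ℕ) (g : ℝ → ℝ) (hg_mono : MonotoneOn g (Set.Icc 0 1))
    (hg1 : g 1 = 1) (j : ℕ) (hjn : j < n)
    (htop : g (((j:ℝ)+1)/n) = 1) (x : Fin n → ℝ) :
    ∑ i, coeff n g i * max (absSorted x i - absSorted x ⟨j, hjn⟩) 0 = 0 := by
  have hn : 0 < n := lt_of_le_of_lt (Nat.zero_le j) hjn
  have hn' : (0:ℝ) < n := by exact_mod_cast hn
  have hamono : Monotone (absSorted x) := Tuple.monotone_sort (fun j => |x j|)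
  apply Finset.sum_eq_zero
  intro i _
  by_cases hji : (i:ℕ) ≤ j
  · have hia : absSorted x i ≤ absSorted x ⟨j, hjn⟩ := hamono (by simpa [Fin.le_def] using hji)
    rw [max_eq_right (by linarith), mul_zero]
  · -- j < i, so coeff i = 0
    have hj1i : j + 1 ≤ (i:ℕ) := by omega
    have hmem : ∀ m : ℕ, m ≤ n → ((m:ℝ)/n) ∈ Set.Icc (0:ℝ) 1 := fun m hm => grid_mem hn hm
    have hup : ∀ m : ℕ, j + 1 ≤ m → m ≤ n → g ((m:ℝ)/n) = 1 := by
      intro m h1 h2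
      have hle1 : g (((j:ℝ)+1)/n) ≤ g ((m:ℝ)/n) := by
        apply hg_mono (by
          have := hmem (j+1) (by omega); push_cast at this; exact this) (hmem m h2)
        have := grid_div_le (a := j+1) (b := m) hn h1
        push_cast at this; exact this
      have hle2 : g ((m:ℝ)/n) ≤ g 1 := by
        apply hg_mono (hmem m h2) (by norm_num)
        exact (hmem m h2).2
      rw [hg1] at hle2
      rw [htop] at hle1
      linarith
    have hc : coeff n g i = 0 := by
      have e1 : g ((((i:ℕ):ℝ)+1)/n) = 1 := by
        have := hup ((i:ℕ)+1) (by omega) i.isLt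
        push_cast at this; exact this
      have e2 : g (((i:ℕ):ℝ)/n) = 1 := hup (i:ℕ) hj1i (le_of_lt i.isLt)
      simp [coeff, e1, e2]
    rw [hc, zero_mul]

/-- for `α_j < α < α_{j+1}` (`j = 0,…,n-2`), the non-scaled
generalized-ES norm is the `λ`-weighted average of its values at the grid points
`α_j` and `α_{j+1}`, where `λ = (α_{j+1}-α)/(α_{j+1}-α_j)`. -/
theorem stmt11 (n : ℕ) (hn : 1 ≤ n) (g : ℝ → ℝ)
    (hg_mono : MonotoneOn g (Set.Icc 0 1)) (hg0 : g 0 = 0) (hg1 : g 1 = 1)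
    (hg_cont : ContinuousOn g (Set.Icc 0 1))
    (j : ℕ) (hj : j + 2 ≤ n) (α : ℝ)
    (hα1 : g ((j : ℝ) / n) < α) (hα2 : α < g (((j : ℝ) + 1) / n))
    (l : ℝ)
    (hl : l = (g (((j : ℝ) + 1) / n) - α) / (g (((j : ℝ) + 1) / n) - g ((j : ℝ) / n)))
    (x : Fin n → ℝ) :
    nges g α x
      = l * nges g (g ((j : ℝ) / n)) x + (1 - l) * nges g (g (((j : ℝ) + 1) / n)) x := by
  have hjn : j < n := by omega
  have hn0 : 0 < n := by omega
  have hn' : (0:ℝ) < n := by exact_mod_cast hn0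
  set αj := g ((j:ℝ)/n) with hαj
  set αj1 := g (((j:ℝ)+1)/n) with hαj1
  -- αj1 ≤ 1
  have hj1n : j + 1 ≤ n := by omega
  have hmemj1 : (((j:ℝ)+1)/n) ∈ Set.Icc (0:ℝ) 1 := by
    have := grid_mem (m := j+1) hn0 hj1n; push_cast at this; exact this
  have hαj1le : αj1 ≤ 1 := by
    have h := hg_mono hmemj1 (show (1:ℝ) ∈ Set.Icc (0:ℝ) 1 by norm_num) hmemj1.2
    rw [hg1] at h
    exact h
  have hα1' : α < 1 := lt_of_lt_of_le hα2 hαj1le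
  have hαjlt : αj < 1 := lt_trans hα1 hα1'
  set T := absSorted x ⟨j, hjn⟩ with hT
  set S := ∑ i, coeff n g i * max (absSorted x i - T) 0 with hS
  have hαle : αj ≤ αj1 := le_of_lt (lt_trans hα1 hα2)
  have hA : nges g α x = (n:ℝ) * (1 - α) * T + (n:ℝ) * S :=
    nges_eq n g hg_mono hg1 j hjn α (le_of_lt hα1) (le_of_lt hα2) hα1' x
  have hB : nges g αj x = (n:ℝ) * (1 - αj) * T + (n:ℝ) * S :=
    nges_eq n g hg_mono hg1 j hjn αj le_rfl hαle hαjlt x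
  have hC : nges g αj1 x = (n:ℝ) * (1 - αj1) * T + (n:ℝ) * S := by
    rcases lt_or_eq_of_le hαj1le with hlt | heq
    · exact nges_eq n g hg_mono hg1 j hjn αj1 hαle le_rfl hlt x
    · have hS0 : S = 0 := by
        rw [hS, hT]
        exact sum_zero_of_top n g hg_mono hg1 j hjn (by rw [← hαj1, heq]) x
      rw [hS0]
      have : nges g αj1 x = 0 := by
        rw [nges, ← heq]
        ring
      rw [this, ← heq]
      ring
  have hD : αj1 - αj ≠ 0 := by
    have : αj < αj1 := lt_trans hα1 hα2
    linarith
  have hll : l * (αj1 - αj) = αj1 - α := by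
    rw [hl]
    field_simp
  rw [hA, hB, hC]
  linear_combination (-(n:ℝ) * T) * hll
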